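/- Let n be a positive integer, σ > 0, and let φ₁, φ₂ : ℝⁿ → ℝ be bounded continuous functions. Define γ²_φ(x) = ∫_{ℝⁿ} φ(x − α)·ΔG(α) dα, where ΔG(α) = ((∑_{i=1}^n αᵢ² − nσ²)/σ⁴)·exp(−(∑_{i=1}^n αᵢ²)/(2σ²)). Then sup_{x ∈ ℝⁿ} |γ²_{φ₁}(x) − γ²_{φ₂}(x)| ≤ (2n(2πσ²)^{n/2}/σ²) · sup_{x ∈ ℝⁿ} |φ₁(x) − φ₂(x)|. -/

import Mathlib

open MeasureTheory Real

/-!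
Since `|q - nσ²| ≤ q + nσ²` for `q = ∑ αᵢ² ≥ 0`, the `L¹` norm of `ΔG` is at most
`σ⁻⁴ ∫ q e^{-q/2σ²} + nσ⁻² ∫ e^{-q/2σ²}`. Both Gaussian moments factor over the coordinates,
into `nσ²(2πσ²)^{n/2}` and `(2πσ²)^{n/2}`, so `‖ΔG‖₁ ≤ 2n(2πσ²)^{n/2}/σ²`, and the theorem is
the convolution bound `‖(φ₁ - φ₂) ∗ ΔG‖_∞ ≤ ‖φ₁ - φ₂‖_∞ ‖ΔG‖₁`.
-/

theorem integrable_sq_mul_exp_neg_mul_sq {b : ℝ} (hb : 0 < b) :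
    Integrable fun x : ℝ => x ^ 2 * exp (-b * x ^ 2) := by
  simpa only [rpow_two] using integrable_rpow_mul_exp_neg_mul_sq hb (s := 2) (by norm_num)

theorem integral_sq_mul_exp_neg_mul_sq {b : ℝ} (hb : 0 < b) :
    ∫ x : ℝ, x ^ 2 * exp (-b * x ^ 2) = (2 * b)⁻¹ * √(π / b) := by
  -- integrate `x · (x e^{-bx²})` by parts, `x e^{-bx²}` being the derivative of `-(2b)⁻¹ e^{-bx²}`
  have hv (x : ℝ) : HasDerivAt (fun y => -(2 * b)⁻¹ * exp (-b * y ^ 2))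
      (x * exp (-b * x ^ 2)) x :=
    ((((hasDerivAt_pow 2 x).const_mul (-b)).exp).const_mul (-(2 * b)⁻¹)).congr_deriv (by
      field_simp; ring)
  have hparts := integral_mul_deriv_eq_deriv_mul_of_integrable (u := id) (u' := fun _ => 1)
    (fun x _ => hasDerivAt_id x) (fun x _ => hv x)
    ((integrable_sq_mul_exp_neg_mul_sq hb).congr (.of_forall fun x => by
      simp only [Pi.mul_apply, id]; ring))
    (((integrable_exp_neg_mul_sq hb).const_mul (-(2 * b)⁻¹)).congr (.of_forall fun x => by
      simp only [Pi.mul_apply, one_mul]))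
    (((integrable_mul_exp_neg_mul_sq hb).const_mul (-(2 * b)⁻¹)).congr
      (.of_forall fun x => by simp only [Pi.mul_apply, id]; ring))
  calc ∫ x : ℝ, x ^ 2 * exp (-b * x ^ 2)
      = ∫ x : ℝ, id x * (x * exp (-b * x ^ 2)) := by simp only [id, ← mul_assoc, sq]
    _ = (2 * b)⁻¹ * ∫ x : ℝ, exp (-b * x ^ 2) := by
      rw [hparts, ← integral_const_mul, ← integral_neg]
      simp only [one_mul, neg_mul, neg_neg]
    _ = (2 * b)⁻¹ * √(π / b) := by rw [integral_gaussian]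

theorem integrable_ite_sq_mul_exp_neg_mul_sq {b : ℝ} (hb : 0 < b) (p : Prop) [Decidable p] :
    Integrable fun t : ℝ => (if p then t ^ 2 else 1) * exp (-b * t ^ 2) := by
  split_ifs
  exacts [integrable_sq_mul_exp_neg_mul_sq hb, by simpa using integrable_exp_neg_mul_sq hb]

theorem integral_ite_sq_mul_exp_neg_mul_sq {b : ℝ} (hb : 0 < b) (p : Prop) [Decidable p] :
    ∫ t : ℝ, (if p then t ^ 2 else 1) * exp (-b * t ^ 2)
      = (if p then (2 * b)⁻¹ else 1) * √(π / b) := by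
  split_ifs
  exacts [integral_sq_mul_exp_neg_mul_sq hb, by simpa using integral_gaussian b]

section Pi

variable {ι : Type*} [Fintype ι] {b : ℝ}

theorem exp_neg_mul_sum_sq (b : ℝ) (x : ι → ℝ) :
    exp (-b * ∑ i, x i ^ 2) = ∏ i, exp (-b * x i ^ 2) := by
  rw [Finset.mul_sum, exp_sum]

theorem integrable_exp_neg_mul_sum_sq (hb : 0 < b) :
    Integrable fun x : ι → ℝ => exp (-b * ∑ i, x i ^ 2) := by
  simp only [exp_neg_mul_sum_sq, volume_pi]
  exact Integrable.fintype_prod fun _ => integrable_exp_neg_mul_sq hb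

theorem integral_exp_neg_mul_sum_sq (b : ℝ) :
    ∫ x : ι → ℝ, exp (-b * ∑ i, x i ^ 2) = √(π / b) ^ Fintype.card ι := by
  simp only [exp_neg_mul_sum_sq, volume_pi]
  rw [integral_fintype_prod_eq_pow (fun t : ℝ => exp (-b * t ^ 2)), integral_gaussian]

variable [DecidableEq ι]

-- each summand is a product of one-variable functions, so it integrates by Fubini
theorem sum_sq_mul_exp_neg_mul_sum_sq (b : ℝ) (x : ι → ℝ) :
    (∑ i, x i ^ 2) * exp (-b * ∑ i, x i ^ 2)
      = ∑ i, ∏ j, (if j = i then x j ^ 2 else 1) * exp (-b * x j ^ 2) := by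
  simp only [exp_neg_mul_sum_sq, Finset.sum_mul, Finset.prod_mul_distrib, Finset.prod_ite_eq',
    Finset.mem_univ, if_true]

theorem integrable_prod_ite_sq_mul_exp_neg_mul_sq (hb : 0 < b) (i : ι) :
    Integrable fun x : ι → ℝ => ∏ j, (if j = i then x j ^ 2 else 1) * exp (-b * x j ^ 2) := by
  rw [volume_pi]
  exact Integrable.fintype_prod (f := fun j t => (if j = i then t ^ 2 else 1) * exp (-b * t ^ 2))
    fun j => integrable_ite_sq_mul_exp_neg_mul_sq hb (j = i)

theorem integrable_sum_sq_mul_exp_neg_mul_sum_sq (hb : 0 < b) :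
    Integrable fun x : ι → ℝ => (∑ i, x i ^ 2) * exp (-b * ∑ i, x i ^ 2) := by
  simp only [sum_sq_mul_exp_neg_mul_sum_sq]
  exact integrable_finsetSum _ fun i _ => integrable_prod_ite_sq_mul_exp_neg_mul_sq hb i

theorem integral_prod_ite_sq_mul_exp_neg_mul_sq (hb : 0 < b) (i : ι) :
    ∫ x : ι → ℝ, ∏ j, (if j = i then x j ^ 2 else 1) * exp (-b * x j ^ 2)
      = (2 * b)⁻¹ * √(π / b) ^ Fintype.card ι := by
  rw [volume_pi, integral_fintype_prod_eq_prod
    (fun j t => (if j = i then t ^ 2 else 1) * exp (-b * t ^ 2))]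
  simp only [integral_ite_sq_mul_exp_neg_mul_sq hb, Finset.prod_mul_distrib, Finset.prod_ite_eq',
    Finset.mem_univ, if_true, Finset.prod_const, Finset.card_univ]

theorem integral_sum_sq_mul_exp_neg_mul_sum_sq (hb : 0 < b) :
    ∫ x : ι → ℝ, (∑ i, x i ^ 2) * exp (-b * ∑ i, x i ^ 2)
      = Fintype.card ι * (2 * b)⁻¹ * √(π / b) ^ Fintype.card ι := by
  simp only [sum_sq_mul_exp_neg_mul_sum_sq]
  rw [integral_finsetSum _ fun i _ => integrable_prod_ite_sq_mul_exp_neg_mul_sq hb i]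
  simp only [integral_prod_ite_sq_mul_exp_neg_mul_sq hb, Finset.sum_const, Finset.card_univ,
    nsmul_eq_mul, mul_assoc]

end Pi

theorem abs_integral_mul_sub_integral_mul_le {X : Type*} [MeasurableSpace X] {μ : Measure X}
    {f g K : X → ℝ} {M : ℝ} (hK : Integrable K μ) (hf : Integrable (fun x => f x * K x) μ)
    (hg : Integrable (fun x => g x * K x) μ) (hfg : ∀ x, |f x - g x| ≤ M) :
    |∫ x, f x * K x ∂μ - ∫ x, g x * K x ∂μ| ≤ M * ∫ x, |K x| ∂μ := by
  rw [← integral_sub hf hg, ← integral_const_mul M fun x => |K x|]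
  refine norm_integral_le_of_norm_le (G := ℝ) (hK.abs.const_mul M) (.of_forall fun x => ?_)
  rw [← sub_mul, norm_mul, Real.norm_eq_abs, Real.norm_eq_abs]
  exact mul_le_mul_of_nonneg_right (hfg x) (abs_nonneg _)

noncomputable def laplacianGaussian (n : ℕ) (σ : ℝ) (α : Fin n → ℝ) : ℝ :=
  (((∑ i, (α i) ^ 2) - n * σ ^ 2) / σ ^ 4) * exp (-(∑ i, (α i) ^ 2) / (2 * σ ^ 2))

section LaplacianGaussian

variable {n : ℕ} {σ : ℝ}

theorem laplacianGaussian_eq (hσ : σ ≠ 0) (α : Fin n → ℝ) :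
    laplacianGaussian n σ α
      = (σ ^ 4)⁻¹ * ((∑ i, α i ^ 2) * exp (-(2 * σ ^ 2)⁻¹ * ∑ i, α i ^ 2))
        - n / σ ^ 2 * exp (-(2 * σ ^ 2)⁻¹ * ∑ i, α i ^ 2) := by
  rw [laplacianGaussian, neg_div, div_eq_inv_mul _ (2 * σ ^ 2), neg_mul]
  field_simp

theorem abs_laplacianGaussian_le (hσ : σ ≠ 0) (α : Fin n → ℝ) :
    |laplacianGaussian n σ α|
      ≤ (σ ^ 4)⁻¹ * ((∑ i, α i ^ 2) * exp (-(2 * σ ^ 2)⁻¹ * ∑ i, α i ^ 2))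
        + n / σ ^ 2 * exp (-(2 * σ ^ 2)⁻¹ * ∑ i, α i ^ 2) := by
  rw [laplacianGaussian_eq hσ]
  refine (abs_sub _ _).trans (le_of_eq ?_)
  rw [abs_of_nonneg (by positivity), abs_of_nonneg (by positivity)]

theorem integrable_laplacianGaussian (hσ : σ ≠ 0) : Integrable (laplacianGaussian n σ) := by
  simp only [funext (laplacianGaussian_eq hσ)]
  exact ((integrable_sum_sq_mul_exp_neg_mul_sum_sq (by positivity)).const_mul _).sub
    ((integrable_exp_neg_mul_sum_sq (by positivity)).const_mul _)

theorem integral_abs_laplacianGaussian_le (hσ : σ ≠ 0) :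
    ∫ α, |laplacianGaussian n σ α| ≤ 2 * n * (2 * π * σ ^ 2) ^ ((n : ℝ) / 2) / σ ^ 2 := by
  have hb : 0 < (2 * σ ^ 2)⁻¹ := by positivity
  have hq := integrable_sum_sq_mul_exp_neg_mul_sum_sq (ι := Fin n) hb
  have he := integrable_exp_neg_mul_sum_sq (ι := Fin n) hb
  calc ∫ α, |laplacianGaussian n σ α|
      ≤ ∫ α : Fin n → ℝ, (σ ^ 4)⁻¹ * ((∑ i, α i ^ 2) * exp (-(2 * σ ^ 2)⁻¹ * ∑ i, α i ^ 2))
          + n / σ ^ 2 * exp (-(2 * σ ^ 2)⁻¹ * ∑ i, α i ^ 2) :=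
        integral_mono (integrable_laplacianGaussian hσ).abs ((hq.const_mul _).add (he.const_mul _))
          (abs_laplacianGaussian_le hσ)
    _ = 2 * n * √(2 * π * σ ^ 2) ^ n / σ ^ 2 := by
        rw [integral_add (hq.const_mul _) (he.const_mul _), integral_const_mul, integral_const_mul,
          integral_sum_sq_mul_exp_neg_mul_sum_sq hb, integral_exp_neg_mul_sum_sq, div_inv_eq_mul,
          Fintype.card_fin, show π * (2 * σ ^ 2) = 2 * π * σ ^ 2 by ring]
        field_simp
        ring
    _ = 2 * n * (2 * π * σ ^ 2) ^ ((n : ℝ) / 2) / σ ^ 2 := by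
        rw [rpow_div_two_eq_sqrt _ (by positivity), rpow_natCast]

end LaplacianGaussian

theorem glog_second_component_sup_bound_general
    (n : ℕ) (σ : ℝ) (hσ : 0 < σ)
    (φ₁ φ₂ : (Fin n → ℝ) → ℝ)
    (hφ₁c : Continuous φ₁) (hφ₂c : Continuous φ₂)
    (hφ₁b : ∃ C, ∀ x, |φ₁ x| ≤ C) (hφ₂b : ∃ C, ∀ x, |φ₂ x| ≤ C) :
    (⨆ x : Fin n → ℝ,
        |(∫ α : Fin n → ℝ, φ₁ (x - α) *
            ((((∑ i, (α i) ^ 2) - n * σ ^ 2) / σ ^ 4)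
              * Real.exp (-(∑ i, (α i) ^ 2) / (2 * σ ^ 2))))
          - ∫ α : Fin n → ℝ, φ₂ (x - α) *
            ((((∑ i, (α i) ^ 2) - n * σ ^ 2) / σ ^ 4)
              * Real.exp (-(∑ i, (α i) ^ 2) / (2 * σ ^ 2)))|)
      ≤ (2 * n * (2 * Real.pi * σ ^ 2) ^ ((n : ℝ) / 2) / σ ^ 2)
          * ⨆ x : Fin n → ℝ, |φ₁ x - φ₂ x| := by
  obtain ⟨C₁, hC₁⟩ := hφ₁b
  obtain ⟨C₂, hC₂⟩ := hφ₂b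
  have hbdd : BddAbove (Set.range fun x => |φ₁ x - φ₂ x|) :=
    ⟨C₁ + C₂, by rintro _ ⟨y, rfl⟩; exact (abs_sub _ _).trans (add_le_add (hC₁ y) (hC₂ y))⟩
  have hM : 0 ≤ ⨆ x, |φ₁ x - φ₂ x| := (abs_nonneg _).trans (le_ciSup hbdd 0)
  have hK := integrable_laplacianGaussian (n := n) hσ.ne'
  have hconv {φ : (Fin n → ℝ) → ℝ} {C : ℝ} (hφ : Continuous φ) (hC : ∀ y, |φ y| ≤ C)
      (x : Fin n → ℝ) : Integrable fun α => φ (x - α) * laplacianGaussian n σ α :=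
    hK.bdd_mul (hφ.comp (continuous_const.sub continuous_id)).aestronglyMeasurable
      (.of_forall fun α => hC (x - α))
  refine ciSup_le fun x => ?_
  calc _ ≤ (⨆ y, |φ₁ y - φ₂ y|) * ∫ α, |laplacianGaussian n σ α| :=
        abs_integral_mul_sub_integral_mul_le hK (hconv hφ₁c hC₁ x) (hconv hφ₂c hC₂ x)
          fun α => le_ciSup hbdd (x - α)
    _ ≤ _ := by
        rw [mul_comm]
        exact mul_le_mul_of_nonneg_right (integral_abs_laplacianGaussian_le hσ.ne') hM

/-- For bounded continuous `φ₁ φ₂ : ℝⁿ → ℝ`, the LoG-filtered functions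
`γ²_φ(x) = ∫ φ(x − α)·ΔG(α) dα` with
`ΔG(α) = ((∑ αᵢ² − nσ²)/σ⁴)·exp(−(∑ αᵢ²)/(2σ²))` satisfy
`‖γ²_{φ₁} − γ²_{φ₂}‖_∞ ≤ (2n(2πσ²)^(n/2)/σ²) · ‖φ₁ − φ₂‖_∞`. -/
theorem glog_second_component_sup_bound
    (n : ℕ) (hn : 0 < n) (σ : ℝ) (hσ : 0 < σ)
    (φ₁ φ₂ : (Fin n → ℝ) → ℝ)
    (hφ₁c : Continuous φ₁) (hφ₂c : Continuous φ₂)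
    (hφ₁b : ∃ C, ∀ x, |φ₁ x| ≤ C) (hφ₂b : ∃ C, ∀ x, |φ₂ x| ≤ C) :
    (⨆ x : Fin n → ℝ,
        |(∫ α : Fin n → ℝ, φ₁ (x - α) *
            ((((∑ i, (α i) ^ 2) - n * σ ^ 2) / σ ^ 4)
              * Real.exp (-(∑ i, (α i) ^ 2) / (2 * σ ^ 2))))
          - ∫ α : Fin n → ℝ, φ₂ (x - α) *
            ((((∑ i, (α i) ^ 2) - n * σ ^ 2) / σ ^ 4)
              * Real.exp (-(∑ i, (α i) ^ 2) / (2 * σ ^ 2)))|)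
      ≤ (2 * n * (2 * Real.pi * σ ^ 2) ^ ((n : ℝ) / 2) / σ ^ 2)
          * ⨆ x : Fin n → ℝ, |φ₁ x - φ₂ x| :=
  glog_second_component_sup_bound_general n σ hσ φ₁ φ₂ hφ₁c hφ₂c hφ₁b hφ₂b
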